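/- Let λ ∈ ℝ with λ > 0, λ ≠ 1, λ ≠ 4, set β = (1 − λ)/3, and let (P_{p,q})_{p,q∈ℕ} ⊆ ℝ[Z,W] be the recursively defined deltoid eigenpolynomials. For n ∈ ℕ set c_n = (−3)^n (Π_{j=0}^{n−1} (β − j)) / n!. Then for every (z,w) ∈ ℝ² and every n ∈ ℕ, (1/n!) times the n-th derivative at X = 0 of the function X ↦ (1 − 3wX + 3zX² − X³)^β equals c_n · P_{0,n}(z,w) (evaluation of the polynomial P_{0,n} at (Z,W) = (z,w)). In other words, (1 − 3wX + 3zX² − X³)^β = Σ_n c_n P_{0,n}(z,w) X^n is a generating function for the family P_{0,n}. -/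

import Mathlib

noncomputable section

open MvPolynomial

/-- The coefficient `a₁(λ,p)`; it vanishes for `p = 0`. -/
def a1 (lam : ℝ) (p : ℕ) : ℝ :=
  -((p : ℝ) * (3 * p + 2 * lam - 5)) / ((lam + 3 * p - 1) * (lam + 3 * p - 4))

/-- The coefficient `a₂(λ,p,q)`; it vanishes for `q = 0`. -/
def a2 (lam : ℝ) (p q : ℕ) : ℝ :=
  -((q : ℝ) * (3 * q + 2 * lam - 5) * (lam + 3 * ((p : ℝ) + q) - 1) * (lam + p + q - 2)) /
    ((lam + 3 * q - 1) * (2 * lam + 3 * ((p : ℝ) + q) - 5) *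
      (2 * lam + 3 * ((p : ℝ) + q) - 2) * (lam + 3 * q - 4))

/-!
Write `u = 1 - 3wX + 3zX² - X³` and `f = u ^ β`. Near `0`, where `u > 0`, `f` solves
`u f' = β u' f`. Differentiating this `n` times at `0` by Leibniz' rule, only the four coefficients
of the cubic `u` contribute, so `f⁽ⁿ⁾(0)` obeys a four-term linear recurrence. The recursion for `P`
on the column `p = 0` expresses `P_{0,q+1}` through `P_{0,q}`, `P_{0,q-1}`, `P_{0,q-2}` with
coefficients `W`, `a₁(λ,q) Z` and `a₁(λ,q) a₂(λ,0,q-1)`; multiplying by `n! c_n`, whose successive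
ratios are `3(n - β) = λ + 3n - 1`, turns these into the coefficients of the same recurrence. Both
sequences start at `1`.
-/

open Filter Topology Finset
open scoped ContDiff Polynomial

section LeibnizAtZero

theorem Nat.cast_descFactorial_eq_prod_range {R : Type*} [CommRing R] (n k : ℕ) :
    (n.descFactorial k : R) = ∏ j ∈ range k, ((n : R) - j) := by
  rw [← descPochhammer_eval_eq_descFactorial, descPochhammer_eval_eq_prod_range]

variable {𝕜 : Type*} [NontriviallyNormedField 𝕜] {n : ℕ}

theorem iteratedDeriv_pow_mul_zero {g : 𝕜 → 𝕜} (hg : ContDiffAt 𝕜 n g 0) (k : ℕ) :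
    iteratedDeriv n (fun x => x ^ k * g x) 0 = n.descFactorial k * iteratedDeriv (n - k) g 0 := by
  rw [iteratedDeriv_fun_mul (by fun_prop) hg, Finset.sum_eq_single k]
  · rw [iteratedDeriv_fun_pow_zero, if_pos rfl, Nat.descFactorial_eq_factorial_mul_choose]
    push_cast
    ring
  · intro i _ hik
    rw [iteratedDeriv_fun_pow_zero, if_neg hik]
    simp
  · intro hk
    rw [Finset.mem_range, not_lt, Nat.succ_le_iff] at hk
    simp [Nat.choose_eq_zero_of_lt hk]

theorem iteratedDeriv_eval_mul_zero (p : 𝕜[X]) {N : ℕ} (hN : p.natDegree < N) {g : 𝕜 → 𝕜}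
    (hg : ContDiffAt 𝕜 n g 0) :
    iteratedDeriv n (fun x => p.eval x * g x) 0
      = ∑ k ∈ range N, p.coeff k * n.descFactorial k * iteratedDeriv (n - k) g 0 := by
  simp_rw [Polynomial.eval_eq_sum_range' hN, Finset.sum_mul, mul_assoc]
  rw [iteratedDeriv_fun_sum (fun k _ => by fun_prop)]
  refine Finset.sum_congr rfl fun k _ => ?_
  rw [iteratedDeriv_const_mul _ (by fun_prop), iteratedDeriv_pow_mul_zero hg]

theorem iteratedDeriv_eval_mul_deriv_zero (p : 𝕜[X]) {N : ℕ} (hN : p.natDegree < N) {f : 𝕜 → 𝕜}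
    (hf : ContDiffAt 𝕜 (n + 1) f 0) :
    iteratedDeriv n (fun x => p.eval x * deriv f x) 0
      = ∑ k ∈ range N, p.coeff k * n.descFactorial k * iteratedDeriv (n + 1 - k) f 0 := by
  rw [iteratedDeriv_eval_mul_zero p hN (hf.derivWithin le_rfl)]
  refine Finset.sum_congr rfl fun k _ => ?_
  rcases le_or_gt k n with hk | hk
  · rw [← iteratedDeriv_succ', Nat.sub_add_comm hk]
  · simp [Nat.descFactorial_eq_zero_iff_lt.mpr hk]

end LeibnizAtZero

-- `m - 1` and `m - 2` truncate at `0`, but their coefficients vanish there.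
def CubicPowRec (β z w : ℝ) (s : ℕ → ℝ) : Prop :=
  ∀ m : ℕ, s (m + 1) = 3 * w * (m - β) * s m + 3 * z * m * (2 * β - m + 1) * s (m - 1)
    + m * (m - 1) * (m - 2 - 3 * β) * s (m - 2)

theorem CubicPowRec.eq {β z w : ℝ} {s t : ℕ → ℝ} (hs : CubicPowRec β z w s)
    (ht : CubicPowRec β z w t) (h0 : s 0 = t 0) : s = t := by
  funext n
  induction n using Nat.strong_induction_on with
  | _ n ih =>
    cases n with
    | zero => exact h0
    | succ m => rw [hs m, ht m, ih m (by omega), ih (m - 1) (by omega), ih (m - 2) (by omega)]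

theorem Polynomial.eventuallyEq_eval_mul_deriv_rpow (U : ℝ[X]) (β : ℝ) {a : ℝ}
    (ha : 0 < U.eval a) :
    (fun x => U.eval x * deriv (fun y => U.eval y ^ β) x)
      =ᶠ[𝓝 a] fun x => (Polynomial.C β * Polynomial.derivative U).eval x * U.eval x ^ β := by
  filter_upwards [continuousAt_const.eventually_lt U.continuous.continuousAt ha] with x hx
  rw [((U.hasDerivAt x).rpow_const (Or.inl hx.ne')).deriv, Real.rpow_sub_one hx.ne',
    Polynomial.eval_mul, Polynomial.eval_C]
  field_simp

theorem cubicPowRec_iteratedDeriv_rpow (β z w : ℝ) :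
    CubicPowRec β z w
      (fun n => iteratedDeriv n (fun x : ℝ => (1 - 3 * w * x + 3 * z * x ^ 2 - x ^ 3) ^ β) 0) := by
  set U : ℝ[X] := Polynomial.C 1 + Polynomial.C (-3 * w) * Polynomial.X
    + Polynomial.C (3 * z) * Polynomial.X ^ 2 + Polynomial.C (-1) * Polynomial.X ^ 3 with hU
  have hUdeg : U.natDegree < 4 := by rw [hU]; compute_degree!
  have hU0 : U.eval 0 = 1 := by simp [hU]
  have hUeval : ∀ x, U.eval x = 1 - 3 * w * x + 3 * z * x ^ 2 - x ^ 3 := fun x => by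
    simp only [hU, Polynomial.eval_add, Polynomial.eval_mul, Polynomial.eval_C, Polynomial.eval_X,
      Polynomial.eval_pow]
    ring
  simp_rw [← hUeval]
  set f : ℝ → ℝ := fun x => U.eval x ^ β
  have hf : ContDiffAt ℝ ∞ f 0 :=
    (U.contDiff_aeval ∞).contDiffAt.rpow_const_of_ne (by simp [hU0])
  intro m
  have h := (U.eventuallyEq_eval_mul_deriv_rpow β (a := 0) (by simp [hU0])).iteratedDeriv_eq m
  rw [iteratedDeriv_eval_mul_deriv_zero U hUdeg (hf.of_le (by exact_mod_cast le_top)),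
    iteratedDeriv_eval_mul_zero _ (N := 4)
      ((Polynomial.natDegree_C_mul_le _ _).trans_lt
        ((Polynomial.natDegree_derivative_le U).trans_lt (by omega)))
      (hf.of_le (by exact_mod_cast le_top))] at h
  simp only [Finset.sum_range_succ, Finset.sum_range_zero, Polynomial.coeff_C_mul,
    Polynomial.coeff_derivative, hU, Polynomial.coeff_add, Polynomial.coeff_C,
    Polynomial.coeff_X, Polynomial.coeff_X_pow, Nat.cast_descFactorial_eq_prod_range,
    Finset.prod_range_succ, Finset.prod_range_zero] at h
  norm_num [show m + 1 - 2 = m - 1 by omega, show m + 1 - 3 = m - 2 by omega] at h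
  linear_combination h

section Coefficients

variable {lam : ℝ}

theorem lam_add_three_mul_sub_one_ne_zero (hpos : 0 < lam) (hne1 : lam ≠ 1) (k : ℕ) :
    lam + 3 * k - 1 ≠ 0 := by
  rcases k.eq_zero_or_pos with rfl | hk
  · simpa [sub_eq_zero] using hne1
  · have : (1 : ℝ) ≤ k := by exact_mod_cast hk
    exact ne_of_gt (by linarith)

theorem two_mul_lam_add_three_mul_sub_two_ne_zero (hpos : 0 < lam) (hne1 : lam ≠ 1) (k : ℕ) :
    2 * lam + 3 * k - 2 ≠ 0 := by
  rcases k.eq_zero_or_pos with rfl | hk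
  · simpa [sub_eq_zero] using hne1
  · have : (1 : ℝ) ≤ k := by exact_mod_cast hk
    exact ne_of_gt (by linarith)

theorem a1_succ (k : ℕ) :
    a1 lam (k + 1)
      = -((k + 1) * (3 * k + 2 * lam - 2)) / ((lam + 3 * k + 2) * (lam + 3 * k - 1)) := by
  rw [a1]
  push_cast
  ring

theorem a2_zero_succ (hpos : 0 < lam) (hne1 : lam ≠ 1) (k : ℕ) :
    a2 lam 0 (k + 1)
      = -((k + 1) * (lam + k - 1)) / ((2 * lam + 3 * k + 1) * (lam + 3 * k - 1)) := by
  have h1 : lam + 3 * k + 2 ≠ 0 := by positivity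
  have h2 := two_mul_lam_add_three_mul_sub_two_ne_zero hpos hne1 k
  have h3 : 2 * lam + 3 * k + 1 ≠ 0 := by positivity
  have h4 := lam_add_three_mul_sub_one_ne_zero hpos hne1 k
  rw [a2, div_eq_div_iff]
  · push_cast
    ring
  · convert mul_ne_zero (mul_ne_zero (mul_ne_zero h1 h2) h3) h4 using 1
    push_cast
    ring
  · exact mul_ne_zero h3 h4

theorem cubicPowRec_mul (hpos : 0 < lam) (hne1 : lam ≠ 1) {z w : ℝ} {d e : ℕ → ℝ}
    (hd : ∀ m : ℕ, d (m + 1) = (lam + 3 * m - 1) * d m)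
    (he : ∀ q, e (q + 1) = w * e q + a1 lam q * (z * e (q - 1) + a2 lam 0 (q - 1) * e (q - 2))) :
    CubicPowRec ((1 - lam) / 3) z w (fun n => d n * e n) := by
  have hda1 : ∀ m : ℕ, d (m + 1) * a1 lam m = (m * (5 - 2 * lam - 3 * m)) * d (m - 1) := by
    rintro (_ | k)
    · simp [a1]
    · have h1 : lam + 3 * k + 2 ≠ 0 := by positivity
      have h2 := lam_add_three_mul_sub_one_ne_zero hpos hne1 k
      rw [hd, hd, a1_succ, Nat.add_sub_cancel]
      push_cast
      field_simp
      ring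
  have hda1a2 : ∀ m : ℕ, d (m + 1) * (a1 lam m * a2 lam 0 (m - 1))
      = (m * (m - 1) * (m + lam - 3)) * d (m - 2) := by
    rintro (_ | _ | k)
    · simp [a1]
    · simp [a2]
    · have h1 : lam + 3 * ((k : ℝ) + 1) + 2 ≠ 0 := by positivity
      have h2 : lam + 3 * ((k : ℝ) + 1) - 1 ≠ 0 := by
        have : (0 : ℝ) ≤ k := k.cast_nonneg
        exact ne_of_gt (by linarith)
      have h3 : 2 * lam + 3 * k + 1 ≠ 0 := by positivity
      have h4 := lam_add_three_mul_sub_one_ne_zero hpos hne1 k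
      rw [show k + 1 + 1 - 1 = k + 1 by omega, show k + 1 + 1 - 2 = k by omega, hd, hd, hd,
        a1_succ, a2_zero_succ hpos hne1]
      push_cast
      field_simp
      ring
  intro m
  beta_reduce
  rw [he m]
  linear_combination (w * e m) * hd m + (z * e (m - 1)) * hda1 m + e (m - 2) * hda1a2 m

end Coefficients

theorem stmt_17_general (lam : ℝ) (hpos : 0 < lam) (hne1 : lam ≠ 1)
    (β : ℝ) (hβ : β = (1 - lam) / 3)
    (P : ℕ → ℕ → MvPolynomial (Fin 2) ℝ)
    (h00 : P 0 0 = 1)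
    (hrecZ : ∀ p q, P (p + 1) q
      = X 0 * P p q + C (a1 lam p) * P (p - 1) (q + 1) + C (a2 lam p q) * P p (q - 1))
    (hrecW0 : ∀ q, P 0 (q + 1) = X 1 * P 0 q + C (a1 lam q) * P 1 (q - 1))
    (c : ℕ → ℝ)
    (hc : ∀ n : ℕ, c n = (-3 : ℝ) ^ n * (∏ j ∈ Finset.range n, (β - j)) / n.factorial) :
    ∀ (z w : ℝ) (n : ℕ),
      iteratedDeriv n (fun X : ℝ => (1 - 3 * w * X + 3 * z * X ^ 2 - X ^ 3) ^ β) 0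
          / n.factorial
        = c n * MvPolynomial.eval ![z, w] (P 0 n) := by
  intro z w n
  subst hβ
  have he : ∀ q, eval ![z, w] (P 0 (q + 1)) = w * eval ![z, w] (P 0 q) + a1 lam q *
      (z * eval ![z, w] (P 0 (q - 1)) + a2 lam 0 (q - 1) * eval ![z, w] (P 0 (q - 2))) := by
    intro q
    have hP1 : P 1 (q - 1) = X 0 * P 0 (q - 1) + C (a2 lam 0 (q - 1)) * P 0 (q - 2) := by
      simpa [a1, Nat.sub_sub] using hrecZ 0 (q - 1)
    rw [hrecW0, hP1]
    simp
  have hd : ∀ m : ℕ, (-3 : ℝ) ^ (m + 1) * ∏ j ∈ range (m + 1), ((1 - lam) / 3 - j)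
      = (lam + 3 * m - 1) * ((-3) ^ m * ∏ j ∈ range m, ((1 - lam) / 3 - j)) := fun m => by
    rw [pow_succ, prod_range_succ]
    ring
  have key := (cubicPowRec_iteratedDeriv_rpow _ z w).eq
    (cubicPowRec_mul hpos hne1 (d := fun m => (-3) ^ m * ∏ j ∈ range m, ((1 - lam) / 3 - j))
      (e := fun q => eval ![z, w] (P 0 q)) hd he)
    (by simp [h00])
  rw [congrFun key n, hc n]
  field_simp

theorem stmt_17 (lam : ℝ) (hpos : 0 < lam) (hne1 : lam ≠ 1) (hne4 : lam ≠ 4)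
    (β : ℝ) (hβ : β = (1 - lam) / 3)
    (P : ℕ → ℕ → MvPolynomial (Fin 2) ℝ)
    (h00 : P 0 0 = 1)
    (hrecZ : ∀ p q, P (p + 1) q
      = X 0 * P p q + C (a1 lam p) * P (p - 1) (q + 1) + C (a2 lam p q) * P p (q - 1))
    (hrecW0 : ∀ q, P 0 (q + 1) = X 1 * P 0 q + C (a1 lam q) * P 1 (q - 1))
    (c : ℕ → ℝ)
    (hc : ∀ n : ℕ, c n = (-3 : ℝ) ^ n * (∏ j ∈ Finset.range n, (β - j)) / n.factorial) :
    ∀ (z w : ℝ) (n : ℕ),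
      iteratedDeriv n (fun X : ℝ => (1 - 3 * w * X + 3 * z * X ^ 2 - X ^ 3) ^ β) 0
          / n.factorial
        = c n * MvPolynomial.eval ![z, w] (P 0 n) :=
  stmt_17_general lam hpos hne1 β hβ P h00 hrecZ hrecW0 c hc
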